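/- Let X be an integrable real-valued random variable with continuous distribution function and α ∈ (0,1). Define U(x) = x for x ≤ VaR_α(X) and U(x) = VaR_α(X) for x > VaR_α(X). Then U is increasing, continuous and concave, satisfies Assumption (A), and the lower bound is attained: ρ_U^α(X) = VaR_α(X). -/

import Mathlib

open MeasureTheory Real Set

/-- Value at Risk at level `α`: `VaR_α(X) = inf {x | F_X(x) ≥ α}`. -/
noncomputable def VaR {Ω : Type*} [MeasurableSpace Ω] (P : Measure Ω) (X : Ω → ℝ) (α : ℝ) : ℝ :=
  sInf {x : ℝ | α ≤ (P {ω | X ω ≤ x}).toReal}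

/-- The cumulative distribution function of `X` under `P`. -/
noncomputable def cdfR {Ω : Type*} [MeasurableSpace Ω] (P : Measure Ω) (X : Ω → ℝ) (x : ℝ) : ℝ :=
  (P {ω | X ω ≤ x}).toReal

/-- Conditional expectation of `f` given the event `A`: `E[f | A]`. -/
noncomputable def condExpOn {Ω : Type*} [MeasurableSpace Ω] (P : Measure Ω) (f : Ω → ℝ)
    (A : Set Ω) : ℝ :=
  (∫ ω in A, f ω ∂P) / (P A).toReal

/-- The tail event `{X ≥ VaR_α(X)}`. -/
def tailEvent {Ω : Type*} [MeasurableSpace Ω] (P : Measure Ω) (X : Ω → ℝ) (α : ℝ) : Set Ω :=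
  {ω | VaR P X α ≤ X ω}

/-- Generalized inverse `U⁻¹(y) = inf {x | U(x) ≥ y}`. -/
noncomputable def ginv (U : ℝ → ℝ) (y : ℝ) : ℝ := sInf {x : ℝ | y ≤ U x}

/-- Tail Quasi-Linear Mean `ρ_U^α(X) = U⁻¹(E[U(X) | X ≥ VaR_α(X)])`. -/
noncomputable def TQLM {Ω : Type*} [MeasurableSpace Ω] (P : Measure Ω) (X : Ω → ℝ) (α : ℝ)
    (U : ℝ → ℝ) : ℝ :=
  ginv U (condExpOn P (fun ω => U (X ω)) (tailEvent P X α))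

/-- Conditional Tail Expectation `CTE_α(X) = E[X | X ≥ VaR_α(X)]`. -/
noncomputable def CTE {Ω : Type*} [MeasurableSpace Ω] (P : Measure Ω) (X : Ω → ℝ) (α : ℝ) : ℝ :=
  condExpOn P X (tailEvent P X α)

/-- Tail Conditional Entropic Risk Measure `ρ_γ^α(X) = (1/γ) log E[e^{γX} | X ≥ VaR_α(X)]`. -/
noncomputable def TCERM {Ω : Type*} [MeasurableSpace Ω] (P : Measure Ω) (X : Ω → ℝ) (α : ℝ)
    (γ : ℝ) : ℝ :=
  (1 / γ) * Real.log (condExpOn P (fun ω => Real.exp (γ * X ω)) (tailEvent P X α))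

/-!
On the tail event `{X ≥ VaR_α(X)}` the utility `U x = min x VaR_α(X)` is constantly `VaR_α(X)`,
so the conditional mean of `U(X)` there is `VaR_α(X)` as soon as the tail event is not null, and
`U⁻¹(VaR_α(X)) = VaR_α(X)`. The tail event is not null because, by continuity from below,
`P(X < VaR_α(X)) ≤ α < 1`.
-/

open Filter Topology ProbabilityTheory

section ValueAtRisk

variable {Ω : Type*} [MeasurableSpace Ω] {P : Measure Ω} [IsProbabilityMeasure P]
  {X : Ω → ℝ} {α : ℝ}

lemma cdfR_eq_cdf_map (hX : Measurable X) : cdfR P X = cdf (P.map X) := by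
  have : IsProbabilityMeasure (P.map X) := Measure.isProbabilityMeasure_map hX.aemeasurable
  ext x
  rw [cdf_eq_real, measureReal_def, Measure.map_apply hX measurableSet_Iic]
  rfl

lemma bddBelow_setOf_le_cdfR (hX : Measurable X) (hα : 0 < α) :
    BddBelow {x | α ≤ cdfR P X x} := by
  have hlim : Tendsto (cdfR P X) atBot (𝓝 0) := by
    rw [cdfR_eq_cdf_map hX]
    exact tendsto_cdf_atBot _
  obtain ⟨x₀, hx₀⟩ := eventually_atBot.1 (hlim.eventually (eventually_lt_nhds hα))
  exact ⟨x₀, fun x hx => not_lt.1 fun hlt => (hx₀ x hlt.le).not_ge hx⟩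

lemma cdfR_lt_of_lt_VaR (hX : Measurable X) (hα : 0 < α) {x : ℝ} (hx : x < VaR P X α) :
    cdfR P X x < α :=
  not_le.1 (notMem_of_lt_csInf (s := {x | α ≤ cdfR P X x}) hx (bddBelow_setOf_le_cdfR hX hα))

lemma measure_lt_VaR_le (hX : Measurable X) (hα : 0 < α) :
    P {ω | X ω < VaR P X α} ≤ ENNReal.ofReal α := by
  set v := VaR P X α
  have hlt (n : ℕ) : v - 1 / (n + 1) < v := sub_lt_self v Nat.one_div_pos_of_nat
  have hunion : {ω | X ω < v} = ⋃ n : ℕ, {ω | X ω ≤ v - 1 / (n + 1)} := by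
    ext ω
    simp only [mem_ofPred_eq, mem_iUnion]
    refine ⟨fun h => ?_, fun ⟨n, hn⟩ => hn.trans_lt (hlt n)⟩
    obtain ⟨n, hn⟩ := exists_nat_one_div_lt (sub_pos.2 h)
    exact ⟨n, by linarith⟩
  have hmono : Monotone fun n : ℕ => {ω | X ω ≤ v - 1 / (n + 1)} := fun m n hmn ω hω =>
    hω.trans (sub_le_sub_left (Nat.one_div_le_one_div hmn) v)
  rw [hunion]
  refine le_of_tendsto' (tendsto_measure_iUnion_atTop hmono) fun n => ?_
  rw [Function.comp_apply, ← ENNReal.ofReal_toReal (measure_ne_top P _)]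
  exact ENNReal.ofReal_le_ofReal (cdfR_lt_of_lt_VaR hX hα (hlt n)).le

lemma measure_tailEvent_ne_zero (hX : Measurable X) (hα : α ∈ Ioo 0 1) :
    P (tailEvent P X α) ≠ 0 := by
  intro h
  have hcover : univ ⊆ {ω | X ω < VaR P X α} ∪ tailEvent P X α :=
    fun ω _ => lt_or_ge (X ω) (VaR P X α)
  have : (1 : ENNReal) ≤ ENNReal.ofReal α := calc
    1 = P univ := measure_univ.symm
    _ ≤ P {ω | X ω < VaR P X α} + P (tailEvent P X α) :=
      (measure_mono hcover).trans (measure_union_le _ _)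
    _ ≤ ENNReal.ofReal α := by rw [h, add_zero]; exact measure_lt_VaR_le hX hα.1
  exact hα.2.not_ge (ENNReal.one_le_ofReal.1 this)

end ValueAtRisk

lemma condExpOn_eq_of_eqOn_const {Ω : Type*} [MeasurableSpace Ω] {P : Measure Ω}
    [IsFiniteMeasure P] {f : Ω → ℝ} {A : Set Ω} {c : ℝ} (hA : MeasurableSet A) (hPA : P A ≠ 0)
    (hf : EqOn f (fun _ => c) A) : condExpOn P f A = c := by
  have hPA' : (P A).toReal ≠ 0 := ENNReal.toReal_ne_zero.2 ⟨hPA, measure_ne_top P A⟩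
  rw [condExpOn, setIntegral_congr_fun hA hf, setIntegral_const, smul_eq_mul, measureReal_def,
    mul_div_cancel_left₀ c hPA']

lemma ginv_min_const (v : ℝ) : ginv (fun x => min x v) v = v := by
  have hset : {x : ℝ | v ≤ min x v} = Ici v := by ext x; simp
  rw [ginv, hset, csInf_Ici]

lemma strictMonoOn_min_const (v : ℝ) : StrictMonoOn (fun x => min x v) (Iic v) :=
  fun a (ha : a ≤ v) b (hb : b ≤ v) hab => by simpa only [min_eq_left ha, min_eq_left hb] using hab

theorem TQLM_lower_bound_attained_general
    {Ω : Type*} [MeasurableSpace Ω] (P : Measure Ω) [IsProbabilityMeasure P]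
    (X : Ω → ℝ) (hX : Measurable X)
    (α : ℝ) (hα : α ∈ Set.Ioo (0:ℝ) 1) :
    Monotone (fun x => min x (VaR P X α)) ∧
    Continuous (fun x => min x (VaR P X α)) ∧
    ConcaveOn ℝ Set.univ (fun x => min x (VaR P X α)) ∧
    (∃ ε > 0, StrictMonoOn (fun x => min x (VaR P X α))
        (Set.Ioo (VaR P X α - ε) (VaR P X α))) ∧
    TQLM P X α (fun x => min x (VaR P X α)) = VaR P X α := by
  refine ⟨fun a b hab => min_le_min_right _ hab, continuous_id.min continuous_const,
    (concaveOn_id convex_univ).inf (concaveOn_const _ convex_univ),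
    ⟨1, one_pos, (strictMonoOn_min_const _).mono (Ioo_subset_Iio_self.trans Iio_subset_Iic_self)⟩,
    ?_⟩
  have hcond : condExpOn P (fun ω => min (X ω) (VaR P X α)) (tailEvent P X α) = VaR P X α :=
    condExpOn_eq_of_eqOn_const (hX measurableSet_Ici) (measure_tailEvent_ne_zero hX hα)
      fun _ hω => min_eq_right hω
  rw [TQLM, hcond, ginv_min_const]

/-- With `U(x) = x` for `x ≤ VaR_α(X)` and `U(x) = VaR_α(X)` for
`x > VaR_α(X)` (i.e. `U x = min x (VaR_α(X))`), `U` is increasing, continuous,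
concave, satisfies Assumption (A), and the lower bound is attained:
`ρ_U^α(X) = VaR_α(X)`. -/
theorem TQLM_lower_bound_attained
    {Ω : Type*} [MeasurableSpace Ω] (P : Measure Ω) [IsProbabilityMeasure P]
    (X : Ω → ℝ) (hX : Measurable X) (hXint : Integrable X P)
    (hFX : Continuous (cdfR P X))
    (α : ℝ) (hα : α ∈ Set.Ioo (0:ℝ) 1) :
    Monotone (fun x => min x (VaR P X α)) ∧
    Continuous (fun x => min x (VaR P X α)) ∧
    ConcaveOn ℝ Set.univ (fun x => min x (VaR P X α)) ∧
    (∃ ε > 0, StrictMonoOn (fun x => min x (VaR P X α))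
        (Set.Ioo (VaR P X α - ε) (VaR P X α))) ∧
    TQLM P X α (fun x => min x (VaR P X α)) = VaR P X α :=
  TQLM_lower_bound_attained_general P X hX α hα
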